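/- Let (X,d) be a finite ultrametric space with |X| ≥ 2 whose diametral graph G_d is complete bipartite with parts X₁ and X₂. If the metric subspaces (X₁,d) and (X₂,d) satisfy |Sp(X₁)| = |X₁| − 1 and |Sp(X₂)| = |X₂| − 1, and Sp(X₁) ∩ Sp(X₂) = ∅, then |Sp(X)| = |X| − 1. -/
import Mathlib


/-- The spectrum of a metric (sub)space: the set of nonzero distances realized
between distinct points of `A`. -/
def spec {X : Type*} [MetricSpace X] (A : Set X) : Set ℝ :=
  {r : ℝ | ∃ x ∈ A, ∃ y ∈ A, x ≠ y ∧ dist x y = r}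

lemma spec_finite {X : Type*} [MetricSpace X] [Fintype X] (A : Set X) :
    (spec A).Finite := by
  have h : spec A ⊆ (fun p : X × X => dist p.1 p.2) '' Set.univ := by
    rintro r ⟨x, hx, y, hy, hne, rfl⟩
    exact ⟨(x, y), trivial, rfl⟩
  exact (Set.finite_univ.image _).subset h

/-- Let `(X,d)` be a finite ultrametric space with `|X| ≥ 2` whose
diametral graph is complete bipartite with parts `X₁`, `X₂`. If
`|Sp(X₁)| = |X₁| − 1`, `|Sp(X₂)| = |X₂| − 1` and `Sp(X₁) ∩ Sp(X₂) = ∅`, then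
`|Sp(X)| = |X| − 1`. -/
theorem stmt8 {X : Type*} [MetricSpace X] [Fintype X]
    (hultra : ∀ x y z : X, dist x y ≤ max (dist x z) (dist z y))
    (hcard : 2 ≤ Fintype.card X)
    (X₁ X₂ : Set X) (h₁ : X₁.Nonempty) (h₂ : X₂.Nonempty)
    (hdisj : X₁ ∩ X₂ = ∅) (hunion : X₁ ∪ X₂ = Set.univ)
    (hbip : ∀ u v : X, dist u v = Metric.diam (Set.univ : Set X) ↔
      ((u ∈ X₁ ∧ v ∈ X₂) ∨ (u ∈ X₂ ∧ v ∈ X₁)))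
    (hs₁ : (spec X₁).ncard = X₁.ncard - 1)
    (hs₂ : (spec X₂).ncard = X₂.ncard - 1)
    (hdisjsp : spec X₁ ∩ spec X₂ = ∅) :
    (spec (Set.univ : Set X)).ncard = Fintype.card X - 1 := by
  classical
  set D := Metric.diam (Set.univ : Set X) with hDdef
  have hnotboth : ∀ x : X, x ∈ X₁ → x ∈ X₂ → False := by
    intro x hx1 hx2
    have := Set.eq_empty_iff_forall_notMem.1 hdisj x
    exact this ⟨hx1, hx2⟩
  have hor : ∀ x : X, x ∈ X₁ ∨ x ∈ X₂ := by
    intro x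
    have : x ∈ X₁ ∪ X₂ := by rw [hunion]; trivial
    exact this
  -- the main set identity
  have hset : spec (Set.univ : Set X) = insert D (spec X₁ ∪ spec X₂) := by
    ext r
    constructor
    · rintro ⟨x, -, y, -, hne, rfl⟩
      rcases hor x with hx | hx <;> rcases hor y with hy | hy
      · exact Or.inr (Or.inl ⟨x, hx, y, hy, hne, rfl⟩)
      · exact Or.inl ((hbip x y).2 (Or.inl ⟨hx, hy⟩))
      · exact Or.inl ((hbip x y).2 (Or.inr ⟨hx, hy⟩))
      · exact Or.inr (Or.inr ⟨x, hx, y, hy, hne, rfl⟩)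
    · rintro (rfl | ⟨x, hx, y, hy, hne, rfl⟩ | ⟨x, hx, y, hy, hne, rfl⟩)
      · obtain ⟨x, hx⟩ := h₁
        obtain ⟨y, hy⟩ := h₂
        have hne : x ≠ y := fun h => hnotboth x hx (h ▸ hy)
        exact ⟨x, trivial, y, trivial, hne, (hbip x y).2 (Or.inl ⟨hx, hy⟩)⟩
      · exact ⟨x, trivial, y, trivial, hne, rfl⟩
      · exact ⟨x, trivial, y, trivial, hne, rfl⟩
  have hD1 : D ∉ spec X₁ := by
    rintro ⟨x, hx, y, hy, hne, hdxy⟩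
    rcases (hbip x y).1 hdxy with ⟨-, h⟩ | ⟨h, -⟩
    · exact hnotboth y hy h
    · exact hnotboth x hx h
  have hD2 : D ∉ spec X₂ := by
    rintro ⟨x, hx, y, hy, hne, hdxy⟩
    rcases (hbip x y).1 hdxy with ⟨h, -⟩ | ⟨-, h⟩
    · exact hnotboth x h hx
    · exact hnotboth y h hy
  have hfin1 := spec_finite (X := X) X₁
  have hfin2 := spec_finite (X := X) X₂
  have hdisjoint : Disjoint (spec X₁) (spec X₂) :=
    Set.disjoint_iff_inter_eq_empty.2 hdisjsp
  have hcardu : (spec X₁ ∪ spec X₂).ncard = (spec X₁).ncard + (spec X₂).ncard :=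
    Set.ncard_union_eq hdisjoint hfin1 hfin2
  have hDnot : D ∉ spec X₁ ∪ spec X₂ := by
    rintro (h | h)
    · exact hD1 h
    · exact hD2 h
  have hins : (insert D (spec X₁ ∪ spec X₂)).ncard
      = (spec X₁ ∪ spec X₂).ncard + 1 :=
    Set.ncard_insert_of_notMem hDnot (hfin1.union hfin2)
  have hpart : X₁.ncard + X₂.ncard = Fintype.card X := by
    have := Set.ncard_union_eq (Set.disjoint_iff_inter_eq_empty.2 hdisj)
      (Set.toFinite X₁) (Set.toFinite X₂)
    rw [hunion, Set.ncard_univ, Nat.card_eq_fintype_card] at this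
    omega
  have hpos1 : 0 < X₁.ncard := (Set.ncard_pos (Set.toFinite X₁)).2 h₁
  have hpos2 : 0 < X₂.ncard := (Set.ncard_pos (Set.toFinite X₂)).2 h₂
  rw [hset, hins, hcardu, hs₁, hs₂]
  omega
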